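/- Let 0<q<1 and w∈ℂ∖{0}, and let H(t) := 4·Σ_{n=1}^∞ n·e^{−t|w|[n]_q} for t>0. Then for every ε>0 the function t ↦ t^ε·H(t) is continuous and bounded on (0,∞). -/

import Mathlib

open Complex Real

/-- The q-number `[n]_q = (q^{-n} - q^n)/(q^{-1} - q)`. -/
noncomputable def qnum (q : ℝ) (n : ℕ) : ℝ :=
  (q ^ (-(n : ℤ)) - q ^ (n : ℤ)) / (q ^ (-1 : ℤ) - q)

/-- The heat trace `H(t) = Tr e^{-t|D|} = 4 Σ_{n≥1} n e^{-t|w|[n]_q}` of the Podleś-sphere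
Dirac operator. -/
noncomputable def heatTrace (q : ℝ) (w : ℂ) (t : ℝ) : ℝ :=
  4 * ∑' n : ℕ, ((n : ℝ) + 1) * Real.exp (-(t * (‖w‖ * qnum q (n + 1))))

/-!
Since `[n+1]_q ≥ q^{-n}`, the `n`-th term of `t^ε H(t)` is at most `(n+1) t^ε e^{-t|w|q^{-n}}`,
and maximising `x^ε e^{-bx}` over `x ≥ 0` (at `x = ε/b`) bounds this by a constant times
`(n+1) (q^ε)^n`, uniformly in `t`; these majorants are summable. With `ε = 1`, the same estimate
gives the domination on `[δ, ∞)` that makes `H` continuous there.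
-/

lemma pow_inv_le_qnum_succ {q : ℝ} (hq : 0 < q) (hq1 : q < 1) (n : ℕ) :
    (q ^ n)⁻¹ ≤ qnum q (n + 1) := by
  have hden : 0 < q⁻¹ - q := by linarith [(one_lt_inv₀ hq).mpr hq1]
  have hqn : q ^ n ≤ 1 := pow_le_one₀ hq.le hq1.le
  rw [qnum, le_div_iff₀ (by rwa [zpow_neg_one]), zpow_neg_one, zpow_neg, zpow_natCast]
  have : q ^ (n + 1) ≤ q * (q ^ n)⁻¹ := by
    rw [pow_succ']
    gcongr
    exact hqn.trans ((one_le_inv₀ (pow_pos hq n)).mpr hqn)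
  have hexpand : (q ^ n)⁻¹ * (q⁻¹ - q) = (q ^ (n + 1))⁻¹ - q * (q ^ n)⁻¹ := by
    field_simp
    ring
  linarith

/-- The right-hand side is the value at the maximiser `t = ε/b`. -/
lemma rpow_mul_exp_neg_mul_le {ε b t : ℝ} (hε : 0 < ε) (hb : 0 < b) (ht : 0 ≤ t) :
    t ^ ε * Real.exp (-(t * b)) ≤ (ε / b) ^ ε * Real.exp (-ε) := by
  rcases ht.eq_or_lt with rfl | ht
  · rw [zero_rpow hε.ne', zero_mul]
    positivity
  have hεb : 0 < ε / b := div_pos hε hb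
  rw [rpow_def_of_pos ht, rpow_def_of_pos hεb, ← Real.exp_add, ← Real.exp_add,
    Real.exp_le_exp]
  have hlog := mul_le_mul_of_nonneg_left
    (log_le_sub_one_of_pos (div_pos ht hεb)) hε.le
  rw [log_div ht.ne' hεb.ne'] at hlog
  have hlin : ε * (t / (ε / b) - 1) = t * b - ε := by
    field_simp
  linarith

lemma rpow_mul_exp_neg_mul_qnum_le {q a ε t : ℝ} (hq : 0 < q) (hq1 : q < 1) (ha : 0 < a)
    (hε : 0 < ε) (ht : 0 ≤ t) (n : ℕ) :
    t ^ ε * Real.exp (-(t * (a * qnum q (n + 1)))) ≤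
      (ε / a) ^ ε * Real.exp (-ε) * (q ^ ε) ^ n := by
  have hqn : 0 < q ^ n := pow_pos hq n
  calc t ^ ε * Real.exp (-(t * (a * qnum q (n + 1))))
      ≤ t ^ ε * Real.exp (-(t * (a * (q ^ n)⁻¹))) := by
        gcongr
        exact pow_inv_le_qnum_succ hq hq1 n
    _ ≤ (ε / (a * (q ^ n)⁻¹)) ^ ε * Real.exp (-ε) :=
        rpow_mul_exp_neg_mul_le hε (by positivity) ht
    _ = (ε / a) ^ ε * Real.exp (-ε) * (q ^ ε) ^ n := by
        rw [div_mul_eq_div_div, div_inv_eq_mul, mul_rpow (by positivity) hqn.le,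
          rpow_pow_comm hq.le]
        ring

lemma summable_nat_add_one_mul_geometric {R : Type*} [NormedRing R] [CompleteSpace R] {r : R}
    (hr : ‖r‖ < 1) : Summable fun n : ℕ => ((n : R) + 1) * r ^ n := by
  refine ((summable_pow_mul_geometric_of_norm_lt_one 1 hr).add
    (summable_geometric_of_norm_lt_one hr)).congr fun n => ?_
  simp only [pow_one, add_mul, one_mul]

lemma continuousOn_heatTrace {q : ℝ} (hq : 0 < q) (hq1 : q < 1) {w : ℂ} (hw : w ≠ 0) :
    ContinuousOn (heatTrace q w) (Set.Ioi 0) := by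
  set a := ‖w‖
  have ha : 0 < a := norm_pos_iff.mpr hw
  set K := 1 / a * Real.exp (-1)
  intro t₀ ht₀
  set δ := t₀ / 2
  have hδ : 0 < δ := half_pos ht₀
  have hdom : ∀ n : ℕ, ∀ t ∈ Set.Ioi δ,
      ‖((n : ℝ) + 1) * Real.exp (-(t * (a * qnum q (n + 1))))‖ ≤
        K / δ * (((n : ℝ) + 1) * q ^ n) := by
    intro n t ht
    have hbound : t * Real.exp (-(t * (a * qnum q (n + 1)))) ≤ K * q ^ n := by
      have := rpow_mul_exp_neg_mul_qnum_le hq hq1 ha one_pos (hδ.trans ht).le n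
      simpa only [rpow_one] using this
    have hexp : Real.exp (-(t * (a * qnum q (n + 1)))) ≤ K / δ * q ^ n := by
      rw [div_mul_eq_mul_div, le_div_iff₀ hδ]
      nlinarith [Real.exp_pos (-(t * (a * qnum q (n + 1)))), Set.mem_Ioi.mp ht]
    rw [Real.norm_of_nonneg (by positivity), mul_left_comm (K / δ)]
    exact mul_le_mul_of_nonneg_left hexp (by positivity)
  have hsum : ContinuousOn
      (fun t => ∑' n : ℕ, ((n : ℝ) + 1) * Real.exp (-(t * (a * qnum q (n + 1)))))
      (Set.Ioi δ) :=
    continuousOn_tsum (fun n => by fun_prop)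
      ((summable_nat_add_one_mul_geometric (by rwa [norm_of_nonneg hq.le])).mul_left (K / δ))
      hdom
  exact (continuousAt_const.mul (hsum.continuousAt
    (Ioi_mem_nhds (half_lt_self ht₀)))).continuousWithinAt

lemma rpow_mul_heatTrace_le {q : ℝ} (hq : 0 < q) (hq1 : q < 1) {w : ℂ} (hw : w ≠ 0)
    {ε : ℝ} (hε : 0 < ε) {t : ℝ} (ht : 0 ≤ t) :
    t ^ ε * heatTrace q w t ≤
      4 * ((ε / ‖w‖) ^ ε * Real.exp (-ε) *
        ∑' n : ℕ, ((n : ℝ) + 1) * (q ^ ε) ^ n) := by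
  set K := (ε / ‖w‖) ^ ε * Real.exp (-ε)
  have hterm : ∀ n : ℕ,
      t ^ ε * (((n : ℝ) + 1) * Real.exp (-(t * (‖w‖ * qnum q (n + 1))))) ≤
        K * (((n : ℝ) + 1) * (q ^ ε) ^ n) := fun n => by
    have := rpow_mul_exp_neg_mul_qnum_le hq hq1 (norm_pos_iff.mpr hw) hε ht n
    calc _ = ((n : ℝ) + 1) * (t ^ ε * Real.exp (-(t * (‖w‖ * qnum q (n + 1))))) := by ring
      _ ≤ ((n : ℝ) + 1) * (K * (q ^ ε) ^ n) := by gcongr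
      _ = _ := by ring
  have hqε : ‖q ^ ε‖ < 1 := by
    rw [norm_of_nonneg (by positivity)]
    exact rpow_lt_one hq.le hq1 hε
  have hmajor := (summable_nat_add_one_mul_geometric hqε).mul_left K
  rw [heatTrace, mul_left_comm, ← tsum_mul_left (a := t ^ ε), ← tsum_mul_left (a := K)]
  refine mul_le_mul_of_nonneg_left (Summable.tsum_le_tsum hterm ?_ hmajor) (by norm_num)
  exact hmajor.of_nonneg_of_le (fun n => by positivity) hterm

/-- for every `ε > 0`, the function `t ↦ t^ε · H(t)` is continuous and
bounded on `(0,∞)`. -/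
theorem heatTrace_teps_bounded (q : ℝ) (hq : 0 < q) (hq1 : q < 1)
    (w : ℂ) (hw : w ≠ 0) (ε : ℝ) (hε : 0 < ε) :
    ContinuousOn (fun t : ℝ => t ^ ε * heatTrace q w t) (Set.Ioi 0) ∧
    ∃ C : ℝ, ∀ t ∈ Set.Ioi (0 : ℝ), t ^ ε * heatTrace q w t ≤ C :=
  ⟨(continuous_rpow_const hε.le).continuousOn.mul (continuousOn_heatTrace hq hq1 hw),
    _, fun _ ht => rpow_mul_heatTrace_le hq hq1 hw hε (Set.mem_Ioi.mp ht).le⟩
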